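/- Let 0 ≤ k ≤ n−1. The map μ sending a pair (α₀, ρ) = ({α₁ < ⋯ < α_{n−k−1}}, ρ₁⋯ρ_{k+1}) — where ρ is a word of k+1 distinct elements of [n] and α₀ is the complementary set — to the word α₁ α₂ ⋯ α_{n−k−m−1} α_{n−k−1} α_{n−k−2} ⋯ α_{n−k−m} ρ₁ ⋯ ρ_{k+1}, where m = #{a ∈ α₀ : a > ρ₁}, is a bijection from the set of such pairs onto {σ ∈ S_n : the special reverse wave srw(σ) has length ≥ n−k}, it satisfies des((α₀,ρ)) = des(μ((α₀,ρ))), and its inverse is the map ν sending σ = σ₁⋯σ_n to ({σ₁,…,σ_{n−k−1}}, σ_{n−k}⋯σ_n). -/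

import Mathlib

/-!
Split the complement `α₀` of `ρ` at `ρ₁` into the increasing words `u` (letters below `ρ₁`) and
`v` (letters above `ρ₁`). Then `μ(α₀, ρ) = u · v^rev · ρ`, and since `u · ρ₁ · v` is increasing,
the prefix `u · v^rev · ρ₁` rises, then falls while staying above the last letter of `u`: it lies
inside the special reverse wave, whose length is therefore at least `n - k`. Its descents are the
`|v| = m` descents of `v^rev · ρ₁`, so `des μ(α₀, ρ) = des ρ + m`.

Conversely, when `srw σ` has length at least `n - k`, the first `n - k` letters of `σ` have that
same rise-then-fall shape, so `σ₁ ⋯ σ_{n-k-1} = u · v^rev` with `u · σ_{n-k} · v` increasing.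
Then `u · v` is the sorted complement of `σ_{n-k} ⋯ σ_n` cut at `σ_{n-k}`, exactly as in `μ`.
-/

namespace Paper

/-- number of descents of a word -/
def des : List ℕ → ℕ
  | a :: b :: t => (if b < a then 1 else 0) + des (b :: t)
  | _ => 0

/-- number of inversions of a word -/
def inv : List ℕ → ℕ
  | [] => 0
  | a :: t => (t.countP fun x => decide (x < a)) + inv t

/-- a word is (strictly) increasing -/
def Incr (w : List ℕ) : Prop := w.Chain' (· < ·)

/-- a word is a hook: `a₁ > a₂` and `a₂ < a₃ < ⋯ < a_s`, length ≥ 2 -/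
def IsHook : List ℕ → Prop
  | a :: b :: t => b < a ∧ (b :: t).Chain' (· < ·)
  | _ => False

/-- `(γ, hs)` is the hook factorization data of `w` -/
def IsHookFact (w γ : List ℕ) (hs : List (List ℕ)) : Prop :=
  Incr γ ∧ (∀ h ∈ hs, IsHook h) ∧ w = γ ++ hs.flatten

/-- the statistic `lec` computed from the hooks of a factorization -/
def lecVal (hs : List (List ℕ)) : ℕ := (hs.map inv).sum

/-- one-line word of `σ ∈ S_n`, with entries in `[1..n]` -/
def word {n : ℕ} (σ : Equiv.Perm (Fin n)) : List ℕ :=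
  List.ofFn fun i => (σ i : ℕ) + 1

/-- a word `w₁ ⋯ w_ℓ` with maximum in position `c` is a (nontrivial) reverse wave if
`c ≠ ℓ` and `w₁ < ⋯ < w_{c-1} < w_ℓ < w_{ℓ-1} < ⋯ < w_c`. -/
def IsRevWave (w : List ℕ) : Prop :=
  ∃ c, c + 1 < w.length ∧ (w.take c ++ (w.drop c).reverse).Chain' (· < ·)

/-- a word `w₁ ⋯ w_ℓ` with maximum in position `c` is a (nontrivial) wave if
`c ≠ ℓ` and `w_ℓ < w_{ℓ-1} < ⋯ < w_{c+1} < w₁ < ⋯ < w_c`. -/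
def IsWave (w : List ℕ) : Prop :=
  ∃ c, c + 1 < w.length ∧ ((w.drop (c + 1)).reverse ++ w.take (c + 1)).Chain' (· < ·)

/-- the maximal strictly decreasing run starting below `hi` and staying above `lo` -/
def decRun (hi lo : ℕ) : List ℕ → List ℕ
  | [] => []
  | b :: t => if b < hi ∧ lo < b then b :: decRun b lo t else []

def srwAux (lo : ℕ) : List ℕ → List ℕ
  | [] => []
  | [a] => [a]
  | a :: b :: t => if a < b then a :: srwAux a (b :: t) else a :: decRun a lo (b :: t)

/-- the special reverse wave of a word: the prefix `w₁ ⋯ w_s` where `t` is the position of the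
first descent (the whole word if none) and `s ≥ t` is maximal with
`w_t > w_{t+1} > ⋯ > w_s > w_{t-1}` (convention `w₀ = 0`). -/
def srw (w : List ℕ) : List ℕ := srwAux 0 w

/-- the number of special reverse descents: `des (srw w) + χ(w_s > w_{s+1})` -/
def srdes (w : List ℕ) : ℕ :=
  des (srw w) +
    match (srw w).getLast?, (w.drop (srw w).length).head? with
    | some x, some y => if y < x then 1 else 0
    | _, _ => 0

/-- the prefix `w₁ ⋯ w_t` of `w` ending at the position `t` of the first descent
(the whole word if there is no descent) -/
def incrPrefix : List ℕ → List ℕ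
  | [] => []
  | [a] => [a]
  | a :: b :: t => if a < b then a :: incrPrefix (b :: t) else [a]

/-- the special wave `w_r ⋯ w_t ⋯ w_s` of a word -/
def sw (w : List ℕ) : List ℕ :=
  let pre := incrPrefix w
  match w.drop pre.length with
  | [] => w
  | x :: rs =>
    let kept := pre.takeWhile fun u => decide (u < x)
    pre.drop kept.length ++ x :: decRun x (kept.getLastD 0) rs

/-- the word `w \ sw(w) = w₁ ⋯ w_{r-1} w_{s+1} ⋯ w_ℓ` obtained removing the special wave -/
def swCompl (w : List ℕ) : List ℕ :=
  let pre := incrPrefix w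
  match w.drop pre.length with
  | [] => []
  | x :: rs =>
    let kept := pre.takeWhile fun u => decide (u < x)
    kept ++ rs.drop (decRun x (kept.getLastD 0) rs).length

/-- insertion `ins(a,b) = a₁ ⋯ a_x b₁ ⋯ b_q a_{x+1} ⋯ a_p`, where `x` is maximal with
`a₁ < a₂ < ⋯ < a_x < b_q` -/
def ins (a b : List ℕ) : List ℕ :=
  let pfx := (incrPrefix a).takeWhile fun u => decide (u < b.getLastD 0)
  pfx ++ b ++ a.drop pfx.length

/-- the word `ρ = ρ₁ ⋯ ρ_m` (entries in `[1..n]`) associated to an injection `Fin m ↪ Fin n` -/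
def rho {n m : ℕ} (f : Fin m ↪ Fin n) : List ℕ :=
  List.ofFn fun j => (f j : ℕ) + 1

/-- descent number of the pair `(α₀, ρ)`: `des ρ + #{a ∈ α₀ : a > ρ₁}`,
where `α₀ = [n] \ {ρ₁, …, ρ_m}` -/
def desPair (n : ℕ) {m : ℕ} (f : Fin m ↪ Fin n) : ℕ :=
  des (rho f) + ((Finset.Icc 1 n).filter fun a => a ∉ rho f ∧ (rho f).headI < a).card

/-- descent number of the pair `(α₀, ρ)`, with `ρ` given as a list -/
def desPairL (n : ℕ) (ρ : List ℕ) : ℕ :=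
  des ρ + ((Finset.Icc 1 n).filter fun a => a ∉ ρ ∧ ρ.headI < a).card

/-- the map `μ`, sending `ρ` (with complementary set `α₀ = {α₁ < ⋯ < α_{n-k-1}}`) to
`α₁ ⋯ α_{n-k-m-1} α_{n-k-1} α_{n-k-2} ⋯ α_{n-k-m} ρ₁ ⋯ ρ_{k+1}`,
where `m = #{a ∈ α₀ : a > ρ₁}` -/
def mu (n : ℕ) (ρ : List ℕ) : List ℕ :=
  let A := ((Finset.Icc 1 n).filter fun a => a ∉ ρ).sort (· ≤ ·)
  let m := (A.filter fun a => decide (ρ.headI < a)).length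
  (A.take (A.length - m) ++ (A.drop (A.length - m)).reverse) ++ ρ

open List

theorem des_cons_cons (a b : ℕ) (t : List ℕ) :
    des (a :: b :: t) = (if b < a then 1 else 0) + des (b :: t) := rfl

theorem des_eq_length_sub_one_of_pairwise_gt {l : List ℕ} (h : l.Pairwise (· > ·)) :
    des l = l.length - 1 := by
  induction l with
  | nil => rfl
  | cons a t ih =>
    rcases t with _ | ⟨b, t⟩
    · rfl
    · rw [pairwise_cons] at h
      rw [des_cons_cons, if_pos (h.1 b mem_cons_self), ih h.2]
      simp [Nat.add_comm]

theorem des_append_of_pairwise {u d : List ℕ} (h : (u ++ d.reverse).Pairwise (· < ·)) :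
    des (u ++ d) = d.length - 1 := by
  induction u with
  | nil => exact des_eq_length_sub_one_of_pairwise_gt (pairwise_reverse.1 (by simpa using h))
  | cons a u ih =>
    rw [cons_append, pairwise_cons] at h
    rcases hud : u ++ d with _ | ⟨c, t⟩
    · obtain ⟨rfl, rfl⟩ := append_eq_nil_iff.1 hud
      rfl
    · have hac : a < c := h.1 c (by simpa [← hud] using mem_cons_self (a := c) (l := t))
      rw [cons_append, hud, des_cons_cons, if_neg (by omega), ← hud, ih h.2, zero_add]

theorem des_append_cons (x : List ℕ) (a : ℕ) (t : List ℕ) :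
    des (x ++ a :: t) = des (x ++ [a]) + des (a :: t) := by
  induction x with
  | nil => simp [des]
  | cons b x ih =>
    rcases x with _ | ⟨c, x⟩
    · simp [des_cons_cons, des]
    · simp only [cons_append, des_cons_cons] at ih ⊢
      omega

theorem decRun_prefix (hi lo : ℕ) (r : List ℕ) : decRun hi lo r <+: r := by
  induction r generalizing hi with
  | nil => exact nil_prefix
  | cons b t ih =>
    rw [decRun]
    split
    · exact cons_prefix_cons.2 ⟨rfl, ih b⟩
    · exact nil_prefix

theorem pairwise_decRun (hi lo : ℕ) (r : List ℕ) :
    (hi :: decRun hi lo r).Pairwise (· > ·) ∧ ∀ x ∈ decRun hi lo r, lo < x := by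
  induction r generalizing hi with
  | nil => simp [decRun]
  | cons b t ih =>
    rw [decRun]
    split_ifs with h
    · obtain ⟨ih₁, ih₂⟩ := ih b
      refine ⟨pairwise_cons.2 ⟨?_, ih₁⟩, forall_mem_cons.2 ⟨h.2, ih₂⟩⟩
      exact forall_mem_cons.2 ⟨h.1, fun x hx => lt_trans ((pairwise_cons.1 ih₁).1 x hx) h.1⟩
    · simp

theorem prefix_decRun_append {hi lo : ℕ} {d : List ℕ} (t : List ℕ)
    (hd : (hi :: d).Pairwise (· > ·)) (hlo : ∀ x ∈ d, lo < x) : d <+: decRun hi lo (d ++ t) := by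
  induction d generalizing hi with
  | nil => exact nil_prefix
  | cons b d ih =>
    rw [pairwise_cons] at hd
    rw [cons_append, decRun, if_pos ⟨hd.1 b mem_cons_self, hlo b mem_cons_self⟩]
    exact cons_prefix_cons.2 ⟨rfl, ih hd.2 fun x hx => hlo x (mem_cons_of_mem b hx)⟩

theorem srwAux_prefix (lo : ℕ) (w : List ℕ) : srwAux lo w <+: w := by
  induction w generalizing lo with
  | nil => exact nil_prefix
  | cons a t ih =>
    rcases t with _ | ⟨b, t⟩
    · exact prefix_rfl
    · rw [srwAux]
      split
      · exact cons_prefix_cons.2 ⟨rfl, ih a⟩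
      · exact cons_prefix_cons.2 ⟨rfl, decRun_prefix a lo _⟩

/- A word `u ++ d` with `(u ++ d.reverse).Pairwise (· < ·)` increases along `u`, then decreases
along `d` while staying above the last letter of `u`: the shape of a special reverse wave. -/
theorem exists_srwAux_eq {lo : ℕ} {w : List ℕ} (hlo : ∀ x ∈ w.head?, lo < x) :
    ∃ u d, srwAux lo w = u ++ d ∧ (lo :: (u ++ d.reverse)).Pairwise (· < ·) := by
  induction w generalizing lo with
  | nil => exact ⟨[], [], rfl, by simp⟩
  | cons a t ih =>
    have hla : lo < a := hlo a rfl
    rcases t with _ | ⟨b, t⟩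
    · exact ⟨[a], [], rfl, by simpa using hla⟩
    · by_cases hab : a < b
      · obtain ⟨u, d, hsrw, hud⟩ := ih (lo := a) (fun x hx => by simp_all)
        refine ⟨a :: u, d, by rw [srwAux, if_pos hab, hsrw, cons_append], ?_⟩
        refine pairwise_cons.2 ⟨?_, hud⟩
        exact forall_mem_cons.2 ⟨hla, fun x hx => hla.trans ((pairwise_cons.1 hud).1 x hx)⟩
      · refine ⟨[], a :: decRun a lo (b :: t), by rw [srwAux, if_neg hab, nil_append], ?_⟩
        obtain ⟨hdec, hgt⟩ := pairwise_decRun a lo (b :: t)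
        simp only [nil_append, pairwise_cons, pairwise_reverse, mem_reverse, mem_cons]
        refine ⟨?_, ?_⟩
        · rintro x (rfl | hx)
          exacts [hla, hgt x hx]
        · simpa using hdec

theorem prefix_srwAux_append {lo : ℕ} {u d : List ℕ} (t : List ℕ)
    (hud : (u ++ d.reverse).Pairwise (· < ·)) (hd : d ≠ []) (hlo : ∀ x ∈ d, lo < x) :
    u ++ d <+: srwAux lo (u ++ d ++ t) := by
  induction u generalizing lo with
  | nil =>
    obtain ⟨a, d, rfl⟩ := exists_cons_of_ne_nil hd
    rcases d with _ | ⟨b, d⟩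
    · rcases t with _ | ⟨c, t⟩
      · exact prefix_rfl
      · rw [nil_append, singleton_append, srwAux]
        split <;> exact cons_prefix_cons.2 ⟨rfl, nil_prefix⟩
    · have hdec : (a :: b :: d).Pairwise (· > ·) := pairwise_reverse.1 (by simpa using hud)
      have hba : b < a := (pairwise_cons.1 hdec).1 b mem_cons_self
      rw [nil_append, cons_append, cons_append, srwAux, if_neg (by omega), ← cons_append]
      exact cons_prefix_cons.2
        ⟨rfl, prefix_decRun_append t hdec fun x hx => hlo x (mem_cons_of_mem a hx)⟩
  | cons a u ih =>
    rw [cons_append, pairwise_cons] at hud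
    have hud' : ∀ x ∈ u ++ d, a < x := fun x hx => hud.1 x (by simpa using hx)
    obtain ⟨c, s, hcs⟩ := exists_cons_of_ne_nil (append_ne_nil_of_right_ne_nil u hd)
    have hac : a < c := hud' c (by simp [hcs])
    have hw : u ++ d ++ t = c :: (s ++ t) := by rw [hcs, cons_append]
    rw [cons_append, cons_append, hw, srwAux, if_pos hac, ← hw]
    exact cons_prefix_cons.2 ⟨rfl, ih hud.2 fun x hx => hud' x (mem_append_right u hx)⟩

theorem exists_pairwise_of_concat_prefix {x u d : List ℕ} {r : ℕ} (hpre : x ++ [r] <+: u ++ d)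
    (hud : (u ++ d.reverse).Pairwise (· < ·)) :
    ∃ u' v', x = u' ++ v'.reverse ∧ (u' ++ r :: v').Pairwise (· < ·) := by
  obtain ⟨q, hq⟩ := hpre
  rcases append_eq_append_iff.1 hq with ⟨p, rfl, -⟩ | ⟨p, hp, rfl⟩
  · exact ⟨x, [], by simp, hud.sublist (by simp)⟩
  · rcases eq_nil_or_concat p with rfl | ⟨e, b, rfl⟩
    · rw [append_nil] at hp
      subst hp
      exact ⟨x, [], by simp, hud.sublist (by simp)⟩
    · rw [concat_eq_append, ← append_assoc] at hp
      obtain ⟨rfl, hbr⟩ := append_inj' hp rfl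
      obtain rfl : r = b := by simpa using hbr
      refine ⟨u, e.reverse, by simp, hud.sublist ?_⟩
      simp

theorem append_perm_range'_iff {n : ℕ} {x y : List ℕ} :
    (x ++ y).Perm (range' 1 n) ↔
      x.Nodup ∧ y.Nodup ∧ (∀ a ∈ y, a ∈ Finset.Icc 1 n) ∧
        ∀ a, a ∈ x ↔ a ∈ Finset.Icc 1 n ∧ a ∉ y := by
  have hrange : ∀ a, a ∈ range' 1 n ↔ a ∈ Finset.Icc 1 n := fun a => by
    rw [mem_range'_1, Finset.mem_Icc]; omega
  constructor
  · intro h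
    obtain ⟨hx, hy, hxy⟩ := nodup_append.1 (h.nodup_iff.2 nodup_range')
    have hmem : ∀ a, a ∈ x ∨ a ∈ y ↔ a ∈ Finset.Icc 1 n := fun a => by
      rw [← mem_append, h.mem_iff, hrange]
    refine ⟨hx, hy, fun a ha => (hmem a).1 (.inr ha), fun a => ?_⟩
    exact ⟨fun ha => ⟨(hmem a).1 (.inl ha), fun ha' => hxy a ha a ha' rfl⟩,
      fun ⟨ha, ha'⟩ => ((hmem a).2 ha).resolve_right ha'⟩
  · rintro ⟨hx, hy, hyn, hxn⟩
    refine (perm_ext_iff_of_nodup ?_ nodup_range').2 fun a => ?_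
    · exact nodup_append.2 ⟨hx, hy, fun a ha b hb hab => ((hxn a).1 ha).2 (hab ▸ hb)⟩
    · rw [mem_append, hrange, hxn]
      by_cases ha : a ∈ y <;> simp [ha, hyn]

section Split

variable {u v : List ℕ} {r a : ℕ}

theorem lt_of_mem_left_of_pairwise (huv : (u ++ r :: v).Pairwise (· < ·)) (ha : a ∈ u) : a < r :=
  (pairwise_append.1 huv).2.2 a ha r mem_cons_self

theorem lt_of_mem_right_of_pairwise (huv : (u ++ r :: v).Pairwise (· < ·)) (ha : a ∈ v) :
    r < a :=
  rel_of_pairwise_cons (pairwise_append.1 huv).2.1 ha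

end Split

theorem mu_eq_of_pairwise {n r : ℕ} {ρ u v : List ℕ} (huv : (u ++ r :: v).Pairwise (· < ·))
    (hmem : ∀ a, a ∈ u ++ v ↔ a ∈ Finset.Icc 1 n ∧ a ∉ r :: ρ) :
    mu n (r :: ρ) = u ++ v.reverse ++ r :: ρ := by
  have hsorted : (u ++ v).Pairwise (· < ·) := huv.sublist (by simp)
  have hu : ∀ a ∈ u, a < r := fun _ => lt_of_mem_left_of_pairwise huv
  have hv : ∀ a ∈ v, r < a := fun _ => lt_of_mem_right_of_pairwise huv
  have hA : ((Finset.Icc 1 n).filter fun a => a ∉ r :: ρ).sort (· ≤ ·) = u ++ v := by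
    have : (Finset.Icc 1 n).filter (fun a => a ∉ r :: ρ) = (u ++ v).toFinset := by
      ext a; rw [Finset.mem_filter, mem_toFinset, hmem]
    rw [this, toFinset_sort _ hsorted.nodup]
    exact hsorted.imp le_of_lt
  have hfilter : (u ++ v).filter (fun a => decide ((r :: ρ).headI < a)) = v := by
    rw [filter_append, filter_eq_nil_iff.2 fun a ha => ?_, filter_eq_self.2 fun a ha => ?_,
      nil_append]
    exacts [decide_eq_true (hv a ha), fun h => (hu a ha).not_gt (of_decide_eq_true h)]
  simp only [mu, hA]
  rw [hfilter, length_append, Nat.add_sub_cancel, take_left, drop_left]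

theorem exists_pairwise_split (n r : ℕ) (ρ : List ℕ) :
    ∃ u v, (u ++ r :: v).Pairwise (· < ·) ∧
      ∀ a, a ∈ u ++ v ↔ a ∈ Finset.Icc 1 n ∧ a ∉ r :: ρ := by
  set s := (Finset.Icc 1 n).filter fun a => a ∉ r :: ρ
  refine ⟨(s.filter (· < r)).sort (· ≤ ·), (s.filter (r < ·)).sort (· ≤ ·), ?_, fun a => ?_⟩
  · refine pairwise_append.2 ⟨(Finset.sortedLT_sort _).pairwise,
      pairwise_cons.2 ⟨by simp, (Finset.sortedLT_sort _).pairwise⟩, ?_⟩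
    · simp only [Finset.mem_sort, Finset.mem_filter, mem_cons]
      rintro a ⟨-, ha⟩ b (rfl | ⟨-, hb⟩) <;> omega
  · have hne : a ∈ s → a ≠ r := fun ha => by simp_all [s]
    simp only [mem_append, Finset.mem_sort, Finset.mem_filter]
    rw [← Finset.mem_filter (p := fun a => a ∉ r :: ρ)]
    refine ⟨by rintro (⟨h, -⟩ | ⟨h, -⟩) <;> exact h, fun h => ?_⟩
    rcases lt_or_gt_of_ne (hne h) with h' | h'
    exacts [.inl ⟨h, h'⟩, .inr ⟨h, h'⟩]

theorem des_append_reverse_cons {u v ρ : List ℕ} {r : ℕ} (huv : (u ++ r :: v).Pairwise (· < ·)) :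
    des (u ++ v.reverse ++ r :: ρ) = v.length + des (r :: ρ) := by
  rw [des_append_cons, append_assoc,
    des_append_of_pairwise (d := v.reverse ++ [r]) (by simpa using huv)]
  simp

theorem prefix_srw_append_reverse_cons {u v ρ : List ℕ} {r : ℕ}
    (huv : (u ++ r :: v).Pairwise (· < ·)) (hr : 0 < r) :
    u ++ v.reverse ++ [r] <+: srw (u ++ v.reverse ++ r :: ρ) := by
  have hv : ∀ a ∈ v, r < a := fun _ => lt_of_mem_right_of_pairwise huv
  have hd : ∀ a ∈ v.reverse ++ [r], 0 < a := fun a ha => by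
    rcases mem_append.1 ha with ha | ha
    · exact hr.trans (hv a (mem_reverse.1 ha))
    · rwa [mem_singleton.1 ha]
  simpa [srw] using prefix_srwAux_append ρ (by simpa using huv) (by simp) hd

theorem mu_spec {n k : ℕ} {ρ : List ℕ} (hlen : ρ.length = k + 1) (hnd : ρ.Nodup)
    (hmem : ∀ a ∈ ρ, a ∈ Finset.Icc 1 n) :
    (mu n ρ).Perm (range' 1 n) ∧ n - k ≤ (srw (mu n ρ)).length ∧ desPairL n ρ = des (mu n ρ) ∧
      (mu n ρ).drop (n - k - 1) = ρ ∧
      ((mu n ρ).take (n - k - 1)).toFinset = (Finset.Icc 1 n).filter (fun a => a ∉ ρ) := by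
  obtain ⟨r, ρ, rfl⟩ := exists_cons_of_length_eq_add_one hlen
  obtain ⟨u, v, huv, hM⟩ := exists_pairwise_split n r ρ
  have hM' : ∀ a, a ∈ u ++ v.reverse ↔ a ∈ Finset.Icc 1 n ∧ a ∉ r :: ρ := fun a => by
    rw [← hM]; simp
  have hu : ∀ a ∈ u, a < r := fun _ => lt_of_mem_left_of_pairwise huv
  have hv : ∀ a ∈ v, r < a := fun _ => lt_of_mem_right_of_pairwise huv
  have hperm : (u ++ v.reverse ++ r :: ρ).Perm (range' 1 n) := by
    refine append_perm_range'_iff.2 ⟨?_, hnd, hmem, hM'⟩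
    exact (huv.sublist (by simp)).nodup.perm (perm_append_left_iff u |>.2 (reverse_perm v).symm)
  have hlenx : (u ++ v.reverse).length = n - k - 1 := by
    have := hperm.length_eq
    simp only [length_append, length_cons, length_reverse, length_range'] at this hlen ⊢
    omega
  have hcard : ((Finset.Icc 1 n).filter fun a => a ∉ r :: ρ ∧ (r :: ρ).headI < a).card =
      v.length := by
    rw [← toFinset_card_of_nodup (huv.sublist (by simp)).nodup]
    congr 1
    ext a
    rw [Finset.mem_filter, ← and_assoc, ← hM, mem_toFinset, headI_cons, mem_append]
    exact ⟨fun ⟨ha, hra⟩ => ha.resolve_left fun ha' => (hu a ha').not_gt hra,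
      fun ha => ⟨.inr ha, hv a ha⟩⟩
  rw [mu_eq_of_pairwise huv hM]
  refine ⟨hperm, ?_, ?_, drop_left' hlenx, ?_⟩
  · have := (prefix_srw_append_reverse_cons (ρ := ρ) huv
      (Finset.mem_Icc.1 (hmem r mem_cons_self)).1).length_le
    simp only [length_append, length_reverse, length_singleton] at this hlenx
    omega
  · rw [desPairL, des_append_reverse_cons huv, hcard, Nat.add_comm]
  · rw [take_left' hlenx]
    ext a
    rw [mem_toFinset, Finset.mem_filter, hM']

theorem mu_drop_of_lt_length_srw {n L : ℕ} {σ : List ℕ} (hσ : σ.Perm (range' 1 n))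
    (hL : L < (srw σ).length) : mu n (σ.drop L) = σ := by
  have hpos : ∀ a ∈ σ.head?, 0 < a := fun a ha =>
    (mem_range'_1.1 (hσ.subset (mem_of_mem_head? ha))).1
  obtain ⟨u, d, hsrw, hud⟩ := exists_srwAux_eq hpos
  have hσL : L < σ.length := hL.trans_le (srwAux_prefix 0 σ).length_le
  obtain ⟨r, ρ, hdrop⟩ := exists_cons_of_ne_nil (by simpa using hσL : σ.drop L ≠ [])
  have hpre : σ.take L ++ [r] <+: u ++ d := by
    rw [← hsrw, ← srw]
    have : σ.take (L + 1) = σ.take L ++ [r] := by rw [take_add_one, ← head?_drop, hdrop]; rfl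
    rw [← this]
    exact prefix_of_prefix_length_le (take_prefix _ _) (srwAux_prefix 0 σ)
      (by rw [length_take]; omega)
  obtain ⟨u', v', hx, huv⟩ := exists_pairwise_of_concat_prefix hpre (pairwise_cons.1 hud).2
  have hM := (append_perm_range'_iff.1 ((take_append_drop L σ).symm ▸ hσ)).2.2.2
  rw [hdrop, hx] at hM
  rw [hdrop, mu_eq_of_pairwise huv fun a => by rw [← hM]; simp, ← hx, ← hdrop, take_append_drop]

end Paper

/-- for `0 ≤ k ≤ n - 1`, the map `μ` sending the pair `(α₀, ρ)` (with
`α₀ = {α₁ < ⋯ < α_{n-k-1}}` the complement of the entries of `ρ`) to the word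
`α₁ ⋯ α_{n-k-m-1} α_{n-k-1} ⋯ α_{n-k-m} ρ₁ ⋯ ρ_{k+1}`, where `m = #{a ∈ α₀ : a > ρ₁}`,
is a des-preserving bijection onto `{σ ∈ S_n : (srw σ).length ≥ n - k}`, with inverse
`ν : σ ↦ ({σ₁, …, σ_{n-k-1}}, σ_{n-k} ⋯ σ_n)`. -/
theorem Paper.statement11 (n k : ℕ) (hk : k ≤ n - 1) :
    (∀ ρ : List ℕ, ρ.length = k + 1 → ρ.Nodup → (∀ x ∈ ρ, x ∈ Finset.Icc 1 n) →
      (mu n ρ).Perm (List.range' 1 n) ∧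
      n - k ≤ (srw (mu n ρ)).length ∧
      desPairL n ρ = des (mu n ρ) ∧
      (mu n ρ).drop (n - k - 1) = ρ ∧
      ((mu n ρ).take (n - k - 1)).toFinset = (Finset.Icc 1 n).filter (fun a => a ∉ ρ)) ∧
    (∀ σ : List ℕ, σ.Perm (List.range' 1 n) → n - k ≤ (srw σ).length →
      mu n (σ.drop (n - k - 1)) = σ) := by
  refine ⟨fun ρ hlen hnd hmem => mu_spec hlen hnd hmem, fun σ hσ hle => ?_⟩
  rcases Nat.eq_zero_or_pos n with rfl | hn
  · obtain rfl : σ = [] := by simpa using hσ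
    simp [mu]
  · exact mu_drop_of_lt_length_srw hσ (by omega)
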